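/- For integers $\ell \ge 1$ and $r \ge 2^{\ell}$, the cardinality $A(r,\ell)$ of $\{k \in \mathbb{N}^{\ell} : \prod_{j=1}^{\ell}(1+k_j) \le r\}$ (with all $k_j \ge 1$) satisfies $2^{\ell} v_{\ell}(r/2^{\ell}) \le A(r,\ell) \le v_{\ell}(r)$, where $v_{\ell}(r)$ is the volume of $\{x \in \mathbb{R}^{\ell} : x_j \ge 1, \prod x_j \le r\}$. -/

import Mathlib

open MeasureTheory

/-- `A r ℓ` : number of points `k ∈ ℕ^ℓ` with all `k_j ≥ 1` and `∏ (1+k_j) ≤ r`. -/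
noncomputable def posCount (r ℓ : ℕ) : ℕ :=
  Set.ncard {k : Fin ℓ → ℕ | (∀ j, 1 ≤ k j) ∧ ∏ j, (1 + k j) ≤ r}

/-- `v ℓ r` : the `ℓ`-dimensional Lebesgue volume of the hyperbolic-cross set
`{x ∈ ℝ^ℓ : x_j ≥ 1 for all j, ∏ x_j ≤ r}`. -/
noncomputable def hypVol (ℓ : ℕ) (r : ℝ) : ℝ :=
  (volume {x : Fin ℓ → ℝ | (∀ j, 1 ≤ x j) ∧ ∏ j, x j ≤ r}).toReal

/-!
The disjoint unit cubes `[k, k + 1)` over the counted lattice points `k` lie in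
`{x | 1 ≤ x_j, ∏ x_j ≤ r}`, so `A(r, ℓ) ≤ v_ℓ(r)`. Conversely, a point `x` with all `x_j ≥ 2` and
`∏ x_j ≤ r` lies in the cube `[⌊x⌋, ⌊x⌋ + 1)`, and `k = ⌊x⌋ - 1` is counted because
`∏ ⌊x_j⌋ ≤ ∏ x_j`. Hence `A(r, ℓ)` bounds the volume of `{x | 2 ≤ x_j, ∏ x_j ≤ r}`, which is
`2^ℓ v_ℓ(r / 2^ℓ)` by the substitution `x ↦ 2x`.
-/

open Set
open scoped ENNReal Pointwise

variable {ι : Type*}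

def unitCube (a : ι → ℝ) : Set (ι → ℝ) :=
  univ.pi fun j => Ico (a j) (a j + 1)

lemma pairwise_disjoint_unitCube_natCast :
    Pairwise (Function.onFun Disjoint fun k : ι → ℕ => unitCube fun j => (k j : ℝ)) := by
  intro k k' hkk'
  refine disjoint_left.2 fun x hx hx' => hkk' (funext fun j => ?_)
  obtain ⟨h₁, h₂⟩ : (k j : ℝ) ≤ x j ∧ x j < k j + 1 := hx j (mem_univ j)
  obtain ⟨h₁', h₂'⟩ : (k' j : ℝ) ≤ x j ∧ x j < k' j + 1 := hx' j (mem_univ j)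
  have : k j < k' j + 1 := by exact_mod_cast h₁.trans_lt h₂'
  have : k' j < k j + 1 := by exact_mod_cast h₁'.trans_lt h₂
  omega

variable [Fintype ι]

lemma measurableSet_unitCube (a : ι → ℝ) : MeasurableSet (unitCube a) :=
  .univ_pi fun _ => measurableSet_Ico

@[simp]
lemma volume_unitCube (a : ι → ℝ) : volume (unitCube a) = 1 := by
  simp [unitCube, volume_pi_pi, Real.volume_Ico]

lemma card_le_volume_of_unitCube_subset {S : Finset (ι → ℕ)} {U : Set (ι → ℝ)}
    (h : ∀ k ∈ S, (unitCube fun j => (k j : ℝ)) ⊆ U) : (S.card : ℝ≥0∞) ≤ volume U :=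
  calc (S.card : ℝ≥0∞) = volume (⋃ k ∈ S, unitCube fun j => (k j : ℝ)) := by
        rw [measure_biUnion_finset (pairwise_disjoint_unitCube_natCast.set_pairwise _)
          fun k _ => measurableSet_unitCube _]
        simp
    _ ≤ volume U := measure_mono (iUnion₂_subset h)

lemma volume_le_card_of_subset_biUnion_unitCube {κ : Type*} {S : Finset κ} {a : κ → ι → ℝ}
    {U : Set (ι → ℝ)} (h : U ⊆ ⋃ k ∈ S, unitCube (a k)) : volume U ≤ S.card :=
  calc volume U ≤ volume (⋃ k ∈ S, unitCube (a k)) := measure_mono h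
    _ ≤ ∑ k ∈ S, volume (unitCube (a k)) := measure_biUnion_finset_le S _
    _ = S.card := by simp

variable (ι) in
def hyperbolicCross (a r : ℝ) : Set (ι → ℝ) :=
  {x | (∀ j, a ≤ x j) ∧ ∏ j, x j ≤ r}

variable (ι) in
def latticeHyperbolicCross (r : ℕ) : Set (ι → ℕ) :=
  {k | (∀ j, 1 ≤ k j) ∧ ∏ j, (1 + k j) ≤ r}

lemma le_of_mem_latticeHyperbolicCross {r : ℕ} {k : ι → ℕ} (hk : k ∈ latticeHyperbolicCross ι r)
    (j : ι) : k j ≤ r :=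
  (Nat.le_add_left _ 1).trans <| (Finset.single_le_prod' (fun i _ => Nat.le_add_right 1 (k i))
    (Finset.mem_univ j)).trans hk.2

lemma finite_latticeHyperbolicCross (r : ℕ) : (latticeHyperbolicCross ι r).Finite :=
  (Finite.pi fun _ : ι => finite_Iic r).subset fun _ hk j _ => le_of_mem_latticeHyperbolicCross hk j

lemma hyperbolicCross_subset_pi_Icc {a r : ℝ} (ha : 1 ≤ a) :
    hyperbolicCross ι a r ⊆ univ.pi fun _ => Icc a r := by
  intro x ⟨hax, hx⟩ j _
  refine ⟨hax j, le_trans ?_ hx⟩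
  calc x j = ∏ i ∈ {j}, x i := by simp
    _ ≤ ∏ i, x i := Finset.prod_le_prod_of_subset_of_one_le (Finset.subset_univ _)
        (fun i _ => by linarith [hax i]) fun i _ _ => ha.trans (hax i)

lemma volume_hyperbolicCross_ne_top {a r : ℝ} (ha : 1 ≤ a) : volume (hyperbolicCross ι a r) ≠ ⊤ :=
  ne_top_of_le_ne_top (isCompact_univ_pi fun _ => isCompact_Icc).measure_ne_top
    (measure_mono (hyperbolicCross_subset_pi_Icc ha))

lemma smul_hyperbolicCross {c : ℝ} (hc : 0 < c) (a r : ℝ) :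
    c • hyperbolicCross ι a r = hyperbolicCross ι (c * a) (c ^ Fintype.card ι * r) := by
  ext x
  simp only [mem_smul_set_iff_inv_smul_mem₀ hc.ne', hyperbolicCross, mem_ofPred_eq,
    Pi.smul_apply, smul_eq_mul, Finset.prod_mul_distrib, Finset.prod_const, Finset.card_univ,
    inv_pow, le_inv_mul_iff₀ hc, inv_mul_le_iff₀ (pow_pos hc _)]

lemma volume_hyperbolicCross_mul {c : ℝ} (hc : 0 < c) (a r : ℝ) :
    volume (hyperbolicCross ι (c * a) (c ^ Fintype.card ι * r)) =
      ENNReal.ofReal (c ^ Fintype.card ι) * volume (hyperbolicCross ι a r) := by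
  rw [← smul_hyperbolicCross hc, Measure.addHaar_smul_of_nonneg _ hc.le,
    Module.finrank_fintype_fun_eq_card]

lemma unitCube_natCast_subset_hyperbolicCross {r : ℕ} {k : ι → ℕ}
    (hk : k ∈ latticeHyperbolicCross ι r) :
    (unitCube fun j => (k j : ℝ)) ⊆ hyperbolicCross ι 1 r := by
  intro x hx
  have hkx (j : ι) : (k j : ℝ) ≤ x j ∧ x j < k j + 1 := hx j (mem_univ j)
  have hk₁ (j : ι) : (1 : ℝ) ≤ k j := by exact_mod_cast hk.1 j
  refine ⟨fun j => (hk₁ j).trans (hkx j).1, ?_⟩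
  calc ∏ j, x j ≤ ∏ j, (1 + (k j : ℝ)) :=
        Finset.prod_le_prod (fun j _ => by linarith [hk₁ j, hkx j])
          fun j _ => by linarith [hkx j]
    _ ≤ r := by exact_mod_cast hk.2

lemma hyperbolicCross_two_subset_biUnion_unitCube (r : ℕ) :
    hyperbolicCross ι 2 r ⊆ ⋃ k ∈ (finite_latticeHyperbolicCross (ι := ι) r).toFinset,
      unitCube fun j => (k j : ℝ) + 1 := by
  intro x ⟨hx₂, hx⟩
  have hx₀ (j : ι) : 0 ≤ x j := zero_le_two.trans (hx₂ j)
  have hfloor (j : ι) : 2 ≤ ⌊x j⌋₊ := Nat.le_floor (by exact_mod_cast hx₂ j)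
  set k : ι → ℕ := fun j => ⌊x j⌋₊ - 1
  have hk (j : ι) : (k j : ℝ) + 1 = ⌊x j⌋₊ := by
    rw [← Nat.cast_add_one, Nat.sub_add_cancel (one_le_two.trans (hfloor j))]
  have hkmem : k ∈ latticeHyperbolicCross ι r := by
    refine ⟨fun j => Nat.le_sub_of_add_le (hfloor j), ?_⟩
    have : ∏ j, (1 + (k j : ℝ)) ≤ r :=
      calc ∏ j, (1 + (k j : ℝ)) = ∏ j, (⌊x j⌋₊ : ℝ) := by simp_rw [← hk, add_comm]
        _ ≤ ∏ j, x j := Finset.prod_le_prod (fun _ _ => by positivity)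
            fun j _ => Nat.floor_le (hx₀ j)
        _ ≤ r := hx
    exact_mod_cast this
  refine mem_biUnion ((finite_latticeHyperbolicCross r).mem_toFinset.2 hkmem) fun j _ => ?_
  show x j ∈ Ico ((k j : ℝ) + 1) ((k j : ℝ) + 1 + 1)
  rw [hk]
  exact ⟨Nat.floor_le (hx₀ j), Nat.lt_floor_add_one (x j)⟩

theorem stmt4_general (ℓ r : ℕ) :
    2 ^ ℓ * hypVol ℓ ((r : ℝ) / 2 ^ ℓ) ≤ (posCount r ℓ : ℝ) ∧
    (posCount r ℓ : ℝ) ≤ hypVol ℓ (r : ℝ) := by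
  have hfin := finite_latticeHyperbolicCross (ι := Fin ℓ) r
  have hcount : posCount r ℓ = hfin.toFinset.card := ncard_eq_toFinset_card _ hfin
  have hlower : volume (hyperbolicCross (Fin ℓ) 2 r) ≤ hfin.toFinset.card :=
    volume_le_card_of_subset_biUnion_unitCube (hyperbolicCross_two_subset_biUnion_unitCube r)
  have hupper : (hfin.toFinset.card : ℝ≥0∞) ≤ volume (hyperbolicCross (Fin ℓ) 1 r) :=
    card_le_volume_of_unitCube_subset fun k hk =>
      unitCube_natCast_subset_hyperbolicCross (hfin.mem_toFinset.1 hk)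
  have hscale : volume (hyperbolicCross (Fin ℓ) 2 r) =
      ENNReal.ofReal (2 ^ ℓ) * volume (hyperbolicCross (Fin ℓ) 1 (r / 2 ^ ℓ)) := by
    simpa [mul_div_cancel₀] using
      volume_hyperbolicCross_mul (ι := Fin ℓ) two_pos 1 ((r : ℝ) / 2 ^ ℓ)
  constructor
  · have := ENNReal.toReal_mono (ENNReal.natCast_ne_top _) (hscale ▸ hlower)
    rwa [ENNReal.toReal_mul, ENNReal.toReal_ofReal (by positivity), ENNReal.toReal_natCast,
      ← hcount] at this
  · rw [hcount, ← ENNReal.toReal_natCast]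
    exact ENNReal.toReal_mono (volume_hyperbolicCross_ne_top le_rfl) hupper

theorem stmt4 (ℓ r : ℕ) (hℓ : 1 ≤ ℓ) (hr : 2 ^ ℓ ≤ r) :
    2 ^ ℓ * hypVol ℓ ((r : ℝ) / 2 ^ ℓ) ≤ (posCount r ℓ : ℝ) ∧
    (posCount r ℓ : ℝ) ≤ hypVol ℓ (r : ℝ) :=
  stmt4_general ℓ r
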